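/- Let 1 ≤ p < q < ∞ and define the sequence x = (x_k)_{k∈ℤ} by x_k = |k|^{−1/q} for k ≠ 0 and x_0 = 1. Then x is not p-summable (∑_{k∈ℤ} |x_k|^p = ∞), but for all m ∈ ℤ and N ∈ ℕ one has (2N+1)^{p/q − 1} ∑_{k∈S_{m,N}} |x_k|^p ≤ 3 + 2q/(q−p); in particular ‖x‖_{ℓ^p_q} ≤ (3 + 2q/(q−p))^{1/p} < ∞, so x ∈ ℓ^p_q and the inclusion ℓ^p ⊆ ℓ^p_q is strict. -/

import Mathlib

open scoped ENNReal NNReal BigOperators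

/-- The discrete "ball" `S_{m,N} = {m-N, …, m+N}` as a finite set of integers. -/
noncomputable def S (m : ℤ) (N : ℕ) : Finset ℤ := Finset.Icc (m - N) (m + N)

/-- The discrete Morrey norm `‖x‖_{ℓ^p_q}`. -/
noncomputable def morreyNorm (p q : ℝ) (x : ℤ → ℂ) : ℝ≥0∞ :=
  ⨆ (m : ℤ) (N : ℕ),
    (2 * (N : ℝ≥0∞) + 1) ^ (1 / q - 1 / p) *
      (∑ k ∈ S m N, (‖x k‖₊ : ℝ≥0∞) ^ p) ^ (1 / p)

/-!
With `α = p / q < 1` we have `‖x k‖ ^ p = |k| ^ (-α)` (and `1` at `k = 0`), a divergent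
series. In a window `S m N`, the terms with `|k| ≤ N` add up to at most the centred sum
`1 + 2 ∑_{j ≤ N} j ^ (-α) ≤ 1 + 2 N ^ (1 - α) / (1 - α)` (telescope Bernoulli's inequality
`(1 - α) n ^ (-α) ≤ n ^ (1 - α) - (n - 1) ^ (1 - α)`), and each of the at most `2N + 1` other
terms is at most `(N + 1) ^ (-α)`. After multiplying by `(2N + 1) ^ (α - 1)` the three parts are
bounded by `1`, `2 / (1 - α)` and `2 ^ α ≤ 2`; the Morrey norm bound is the `1 / p`-th power.
-/

open Finset Filter

lemma card_S (m : ℤ) (N : ℕ) : #(S m N) = 2 * N + 1 := by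
  rw [S, Int.card_Icc]
  omega

lemma mul_rpow_sub_one_le_rpow_sub_rpow {β n : ℝ} (hβ0 : 0 ≤ β) (hβ1 : β ≤ 1) (hn : 1 ≤ n) :
    β * n ^ (β - 1) ≤ n ^ β - (n - 1) ^ β := by
  have hn0 : 0 < n := by linarith
  have hbern : (1 - 1 / n) ^ β ≤ 1 - β * (1 / n) := by
    have hs : -1 ≤ -(1 / n) := by rw [neg_le_neg_iff, div_le_one hn0]; exact hn
    simpa [sub_eq_add_neg, mul_neg] using rpow_one_add_le_one_add_mul_self hs hβ0 hβ1
  have hfactor : (n - 1) ^ β = n ^ β * (1 - 1 / n) ^ β := by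
    rw [← Real.mul_rpow hn0.le (by rw [sub_nonneg, div_le_one hn0]; exact hn)]
    congr 1
    field_simp
  have hshift : n ^ (β - 1) = n ^ β * (1 / n) := by
    rw [Real.rpow_sub hn0, Real.rpow_one, mul_one_div]
  rw [hfactor, hshift]
  nlinarith [mul_le_mul_of_nonneg_left hbern (Real.rpow_nonneg hn0.le β)]

lemma sum_Icc_rpow_neg_le {α : ℝ} (hα0 : 0 ≤ α) (hα1 : α < 1) (N : ℕ) :
    ∑ j ∈ Icc 1 N, (j : ℝ) ^ (-α) ≤ (N : ℝ) ^ (1 - α) / (1 - α) := by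
  have hβ : 0 < 1 - α := by linarith
  induction N with
  | zero => simp [Real.zero_rpow hβ.ne']
  | succ N ih =>
    have hstep := mul_rpow_sub_one_le_rpow_sub_rpow hβ.le (by linarith)
      (by simp : (1 : ℝ) ≤ (N + 1 : ℕ))
    rw [show 1 - α - 1 = -α by ring, Nat.cast_succ, add_sub_cancel_right] at hstep
    rw [sum_Icc_succ_top (by omega), Nat.cast_succ, le_div_iff₀ hβ]
    rw [le_div_iff₀ hβ] at ih
    nlinarith

noncomputable def powerWeight (α : ℝ) (k : ℤ) : ℝ := if k = 0 then 1 else |(k : ℝ)| ^ (-α)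

lemma powerWeight_nonneg (α : ℝ) (k : ℤ) : 0 ≤ powerWeight α k := by
  unfold powerWeight; split_ifs <;> positivity

lemma powerWeight_natCast_succ (α : ℝ) (n : ℕ) :
    powerWeight α (n + 1 : ℕ) = ((n + 1 : ℕ) : ℝ) ^ (-α) := by
  rw [powerWeight, if_neg (by omega), Int.cast_natCast, abs_of_nonneg (by positivity)]

lemma powerWeight_neg (α : ℝ) (k : ℤ) : powerWeight α (-k) = powerWeight α k := by
  simp [powerWeight]

lemma not_summable_powerWeight {α : ℝ} (hα : α ≤ 1) : ¬ Summable (powerWeight α) := by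
  intro h
  have hnat : Summable fun n : ℕ => (n : ℝ) ^ (-α) := by
    refine (h.comp_injective Nat.cast_injective).congr_cofinite ?_
    filter_upwards [eventually_cofinite_ne 0] with n hn
    simp [powerWeight, hn]
  rw [Real.summable_nat_rpow] at hnat
  linarith

lemma sum_powerWeight_Icc_neg (α : ℝ) (N : ℕ) :
    ∑ k ∈ Icc (-(N : ℤ)) N, powerWeight α k = 1 + 2 * ∑ j ∈ Icc 1 N, (j : ℝ) ^ (-α) := by
  induction N with
  | zero => simp [powerWeight]
  | succ N ih =>
    have hsplit : Icc (-((N + 1 : ℕ) : ℤ)) (N + 1 : ℕ)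
        = insert (-((N + 1 : ℕ) : ℤ)) (insert ((N + 1 : ℕ) : ℤ) (Icc (-(N : ℤ)) N)) := by
      ext k; simp only [mem_Icc, mem_insert]; omega
    rw [hsplit, sum_insert (by simp only [mem_insert, mem_Icc]; omega),
      sum_insert (by simp only [mem_Icc]; omega), ih, powerWeight_neg, powerWeight_natCast_succ,
      sum_Icc_succ_top (by omega)]
    ring

lemma powerWeight_le_of_lt_abs {α : ℝ} (hα : 0 ≤ α) {N : ℕ} {k : ℤ} (hk : N < |k|) :
    powerWeight α k ≤ ((N : ℝ) + 1) ^ (-α) := by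
  have hk0 : k ≠ 0 := by rintro rfl; simp at hk; omega
  rw [powerWeight, if_neg hk0]
  refine Real.rpow_le_rpow_of_nonpos (by positivity) ?_ (by linarith)
  rw [← Int.cast_abs]
  exact_mod_cast hk

lemma sum_powerWeight_S_le {α : ℝ} (hα0 : 0 ≤ α) (hα1 : α < 1) (m : ℤ) (N : ℕ) :
    ∑ k ∈ S m N, powerWeight α k
      ≤ 1 + 2 * ((N : ℝ) ^ (1 - α) / (1 - α)) + (2 * N + 1) * ((N : ℝ) + 1) ^ (-α) := by
  set B := Icc (-(N : ℤ)) N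
  have hinner : ∑ k ∈ S m N ∩ B, powerWeight α k ≤ 1 + 2 * ((N : ℝ) ^ (1 - α) / (1 - α)) := by
    calc ∑ k ∈ S m N ∩ B, powerWeight α k
        ≤ ∑ k ∈ B, powerWeight α k :=
          sum_le_sum_of_subset_of_nonneg inter_subset_right fun k _ _ ↦ powerWeight_nonneg α k
      _ ≤ _ := by
          rw [sum_powerWeight_Icc_neg]
          linarith [sum_Icc_rpow_neg_le hα0 hα1 N]
  have houter : ∑ k ∈ S m N \ B, powerWeight α k ≤ (2 * N + 1) * ((N : ℝ) + 1) ^ (-α) := by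
    have hcard : (#(S m N \ B) : ℝ) ≤ 2 * N + 1 := by
      exact_mod_cast (card_le_card sdiff_subset).trans (card_S m N).le
    calc ∑ k ∈ S m N \ B, powerWeight α k ≤ #(S m N \ B) • ((N : ℝ) + 1) ^ (-α) := by
          refine sum_le_card_nsmul _ _ _ fun k hk ↦ powerWeight_le_of_lt_abs hα0 ?_
          have := (mem_sdiff.mp hk).2
          simp only [B, mem_Icc, not_and_or, not_le] at this
          rw [lt_abs]; omega
      _ ≤ _ := by
          rw [nsmul_eq_mul]
          gcongr
  rw [← sum_inter_add_sum_sdiff (S m N) B]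
  exact add_le_add hinner houter

lemma rpow_mul_sum_powerWeight_S_le {α : ℝ} (hα0 : 0 ≤ α) (hα1 : α < 1) (m : ℤ) (N : ℕ) :
    (2 * (N : ℝ) + 1) ^ (α - 1) * ∑ k ∈ S m N, powerWeight α k ≤ 3 + 2 / (1 - α) := by
  set D : ℝ := 2 * N + 1
  have hD1 : 1 ≤ D := by simp [D]
  have hD0 : 0 < D := by positivity
  have hDpow : 0 ≤ D ^ (α - 1) := by positivity
  have hconst : D ^ (α - 1) ≤ 1 := Real.rpow_le_one_of_one_le_of_nonpos hD1 (by linarith)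
  have hcentral : D ^ (α - 1) * (N : ℝ) ^ (1 - α) ≤ 1 := by
    calc D ^ (α - 1) * (N : ℝ) ^ (1 - α) ≤ D ^ (α - 1) * D ^ (1 - α) := by
          gcongr
          linarith
      _ = 1 := by rw [← Real.rpow_add hD0]; simp
  have htail : D ^ (α - 1) * (D * ((N : ℝ) + 1) ^ (-α)) ≤ 2 := by
    calc D ^ (α - 1) * (D * ((N : ℝ) + 1) ^ (-α)) = (D / (N + 1)) ^ α := by
          rw [Real.div_rpow hD0.le (by positivity), Real.rpow_neg (by positivity), ← mul_assoc,
            ← Real.rpow_add_one hD0.ne', sub_add_cancel, div_eq_mul_inv]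
      _ ≤ 2 ^ α := by
          gcongr
          rw [div_le_iff₀ (by positivity)]
          simp only [D]; linarith
      _ ≤ 2 ^ (1 : ℝ) := Real.rpow_le_rpow_of_exponent_le (by norm_num) hα1.le
      _ = 2 := Real.rpow_one 2
  calc D ^ (α - 1) * ∑ k ∈ S m N, powerWeight α k
      ≤ D ^ (α - 1) * (1 + 2 * ((N : ℝ) ^ (1 - α) / (1 - α)) + D * ((N : ℝ) + 1) ^ (-α)) :=
        mul_le_mul_of_nonneg_left (sum_powerWeight_S_le hα0 hα1 m N) hDpow
    _ = D ^ (α - 1) + 2 / (1 - α) * (D ^ (α - 1) * (N : ℝ) ^ (1 - α))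
          + D ^ (α - 1) * (D * ((N : ℝ) + 1) ^ (-α)) := by ring
    _ ≤ 1 + 2 / (1 - α) * 1 + 2 := by
        have : 0 ≤ 2 / (1 - α) := div_nonneg zero_le_two (by linarith)
        gcongr
    _ = 3 + 2 / (1 - α) := by ring

lemma morreyNorm_le_ofReal_rpow {p q C : ℝ} (hp : 0 < p) (x : ℤ → ℂ)
    (h : ∀ (m : ℤ) (N : ℕ), (2 * (N : ℝ) + 1) ^ (p / q - 1) * ∑ k ∈ S m N, ‖x k‖ ^ p ≤ C) :
    morreyNorm p q x ≤ ENNReal.ofReal (C ^ (1 / p)) := by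
  refine iSup₂_le fun m N ↦ ?_
  set D : ℝ := 2 * N + 1
  have hD0 : 0 < D := by positivity
  have hsum0 : 0 ≤ ∑ k ∈ S m N, ‖x k‖ ^ p := by positivity
  have hD : 2 * (N : ℝ≥0∞) + 1 = ENNReal.ofReal D := by
    rw [ENNReal.ofReal_add (by positivity) zero_le_one, ENNReal.ofReal_one,
      ENNReal.ofReal_mul zero_le_two, ENNReal.ofReal_ofNat, ENNReal.ofReal_natCast]
  have hsum : ∑ k ∈ S m N, (‖x k‖₊ : ℝ≥0∞) ^ p = ENNReal.ofReal (∑ k ∈ S m N, ‖x k‖ ^ p) := by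
    rw [ENNReal.ofReal_sum_of_nonneg fun k _ ↦ by positivity]
    refine sum_congr rfl fun k _ ↦ ?_
    rw [← ENNReal.ofReal_rpow_of_nonneg (norm_nonneg _) hp.le, ofReal_norm, enorm_eq_nnnorm]
  have hexp : D ^ (1 / q - 1 / p) = (D ^ (p / q - 1)) ^ (1 / p) := by
    rw [← Real.rpow_mul hD0.le]
    congr 1
    field_simp
  rw [hD, hsum, ENNReal.ofReal_rpow_of_pos hD0, ENNReal.ofReal_rpow_of_nonneg hsum0 (by positivity),
    ← ENNReal.ofReal_mul (by positivity), hexp, ← Real.mul_rpow (by positivity) hsum0]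
  exact ENNReal.ofReal_le_ofReal (Real.rpow_le_rpow (by positivity) (h m N) (by positivity))

theorem stmt1 (p q : ℝ) (hp : 1 ≤ p) (hpq : p < q) (x : ℤ → ℂ)
    (hx : ∀ k : ℤ, x k = if k = 0 then 1 else ((|(k : ℝ)| ^ (-(1 / q)) : ℝ) : ℂ)) :
    (¬ Summable fun k : ℤ => ‖x k‖ ^ p) ∧
    (∀ (m : ℤ) (N : ℕ),
      (2 * (N : ℝ) + 1) ^ (p / q - 1) * ∑ k ∈ S m N, ‖x k‖ ^ p ≤ 3 + 2 * q / (q - p)) ∧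
    morreyNorm p q x ≤ ENNReal.ofReal ((3 + 2 * q / (q - p)) ^ (1 / p)) := by
  have hp0 : 0 < p := by linarith
  have hq0 : 0 < q := by linarith
  have hα0 : 0 ≤ p / q := by positivity
  have hα1 : p / q < 1 := (div_lt_one hq0).mpr hpq
  have hweight : (fun k ↦ ‖x k‖ ^ p) = powerWeight (p / q) := by
    ext k
    rw [hx, powerWeight]
    split_ifs
    · simp
    · rw [Complex.norm_real, Real.norm_of_nonneg (by positivity), ← Real.rpow_mul (abs_nonneg _)]
      congr 1
      field_simp
  have hconst : 2 * q / (q - p) = 2 / (1 - p / q) := by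
    field_simp
  have hbound : ∀ (m : ℤ) (N : ℕ),
      (2 * (N : ℝ) + 1) ^ (p / q - 1) * ∑ k ∈ S m N, ‖x k‖ ^ p ≤ 3 + 2 * q / (q - p) := by
    intro m N
    simpa only [hconst, congrFun hweight] using rpow_mul_sum_powerWeight_S_le hα0 hα1 m N
  exact ⟨hweight ▸ not_summable_powerWeight hα1.le, hbound, morreyNorm_le_ofReal_rpow hp0 x hbound⟩
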